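/- arXiv:2412.21083 — 3 statements merged into one kernel-verified Lean document; each statement's English description precedes it below -/
import Mathlib

section
/- The stabilizer entropy is additive under tensor products: M_α(ψ ⊗ φ) = M_α(ψ) + M_α(φ), where the Weyl-Heisenberg group on the composite space ℂ^{d₁} ⊗ ℂ^{d₂} is the tensor product of the groups on the factors. -/
open scoped BigOperators Kronecker
open Matrix

noncomputable section

/-- The primitive `d`-th root of unity `ω = e^{2πi/d}`. -/
def omega (d : ℕ) : ℂ := Complex.exp (2 * Real.pi * Complex.I / d)

/-- A fixed square root of `ω`: `τ = e^{πi/d}`, so `τ ^ 2 = ω`. -/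
def tau (d : ℕ) : ℂ := Complex.exp (Real.pi * Complex.I / d)

/-- Weyl–Heisenberg displacement operator `D_a = ω^{a₁a₂/2} X^{a₁} Z^{a₂}` on `ℂ^d`,
where `X |k⟩ = |k+1⟩` is the shift and `Z |k⟩ = ω^k |k⟩` is the clock (arithmetic mod `d`). -/
def Disp (d : ℕ) (a : ℤ × ℤ) : Matrix (ZMod d) (ZMod d) ℂ := fun j k =>
  tau d ^ (a.1 * a.2) * omega d ^ (a.2 * (k.val : ℤ)) * (if j = k + (a.1 : ZMod d) then 1 else 0)

/-- Rank-one projector `|v⟩⟨v|`. -/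
def proj {n : Type*} (v : n → ℂ) : Matrix n n ℂ := Matrix.vecMulVec v (star v)

/-- Stabilizer entropy of order `α` of a state `ρ` on `ℂ^d`. -/
def stabEntropy (d : ℕ) [NeZero d] (α : ℝ) (ρ : Matrix (ZMod d) (ZMod d) ℂ) : ℝ :=
  (1 / (1 - α)) * Real.log (∑ a : ZMod d × ZMod d,
      ((1 / d) * ‖(Disp d ((a.1.val : ℤ), (a.2.val : ℤ)) * ρ).trace‖ ^ 2) ^ α)
    - Real.log d

/-! The characteristic distribution of `ψ ⊗ φ` at `(a, b)` is the product of those of `ψ` at `a`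
and of `φ` at `b`, since the trace of a Kronecker product is the product of the traces. So the sum
of its `α`-th powers factors and the logarithm splits; the `a = 0` term keeps each factor positive,
since `D_0 = 1` and a normalized state has unit trace. -/

lemma Disp_zero (d : ℕ) : Disp d (0, 0) = 1 := by
  ext j k
  simp [Disp, Matrix.one_apply]

lemma trace_proj {n : Type*} [Fintype n] (v : n → ℂ) :
    (proj v).trace = ((∑ k, ‖v k‖ ^ 2 : ℝ) : ℂ) := by
  simp [proj, Matrix.trace, Matrix.vecMulVec_apply, Complex.mul_conj, Complex.normSq_eq_norm_sq]

lemma trace_kronecker_mul_kronecker {m n : Type*} [Fintype m] [Fintype n]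
    (A ρ : Matrix m m ℂ) (B σ : Matrix n n ℂ) :
    ((A ⊗ₖ B) * (ρ ⊗ₖ σ)).trace = (A * ρ).trace * (B * σ).trace := by
  rw [← mul_kronecker_mul, trace_kronecker]

def charDistr (d : ℕ) [NeZero d] (ρ : Matrix (ZMod d) (ZMod d) ℂ) (a : ZMod d × ZMod d) : ℝ :=
  (1 / d) * ‖(Disp d ((a.1.val : ℤ), (a.2.val : ℤ)) * ρ).trace‖ ^ 2

lemma charDistr_nonneg (d : ℕ) [NeZero d] (ρ : Matrix (ZMod d) (ZMod d) ℂ) (a : ZMod d × ZMod d) :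
    0 ≤ charDistr d ρ a := by
  unfold charDistr; positivity

lemma stabEntropy_eq_log_sum_charDistr (d : ℕ) [NeZero d] (α : ℝ)
    (ρ : Matrix (ZMod d) (ZMod d) ℂ) :
    stabEntropy d α ρ = (1 / (1 - α)) * Real.log (∑ a, charDistr d ρ a ^ α) - Real.log d :=
  rfl

lemma charDistr_zero_proj (d : ℕ) [NeZero d] {v : ZMod d → ℂ} (hv : ∑ k, ‖v k‖ ^ 2 = 1) :
    charDistr d (proj v) 0 = 1 / d := by
  simp [charDistr, ZMod.val_zero, Disp_zero, trace_proj, hv]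

lemma sum_charDistr_proj_rpow_pos (d : ℕ) [NeZero d] (α : ℝ) {v : ZMod d → ℂ}
    (hv : ∑ k, ‖v k‖ ^ 2 = 1) :
    0 < ∑ a, charDistr d (proj v) a ^ α := by
  refine Finset.sum_pos' (fun a _ => Real.rpow_nonneg (charDistr_nonneg d _ a) α)
    ⟨0, Finset.mem_univ _, ?_⟩
  rw [charDistr_zero_proj d hv]
  exact Real.rpow_pos_of_pos (by simp [Nat.pos_of_neZero]) α

lemma sum_rpow_charDistr_kronecker (d₁ d₂ : ℕ) [NeZero d₁] [NeZero d₂] (α : ℝ)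
    (ρ : Matrix (ZMod d₁) (ZMod d₁) ℂ) (σ : Matrix (ZMod d₂) (ZMod d₂) ℂ) :
    ∑ a : (ZMod d₁ × ZMod d₁) × (ZMod d₂ × ZMod d₂),
        ((1 / (d₁ * d₂) : ℝ) *
          ‖(((Disp d₁ ((a.1.1.val : ℤ), (a.1.2.val : ℤ)) ⊗ₖ
                Disp d₂ ((a.2.1.val : ℤ), (a.2.2.val : ℤ))) * (ρ ⊗ₖ σ)).trace)‖ ^ 2) ^ α
      = (∑ a, charDistr d₁ ρ a ^ α) * (∑ b, charDistr d₂ σ b ^ α) := by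
  rw [Fintype.sum_prod_type, Finset.sum_mul_sum]
  refine Finset.sum_congr rfl fun a _ => Finset.sum_congr rfl fun b _ => ?_
  rw [← Real.mul_rpow (charDistr_nonneg d₁ ρ a) (charDistr_nonneg d₂ σ b),
    trace_kronecker_mul_kronecker, charDistr, charDistr, norm_mul, mul_pow]
  ring_nf

theorem stabEntropy_additive_general (d₁ d₂ : ℕ) [NeZero d₁] [NeZero d₂] (α : ℝ)
    (ψ : ZMod d₁ → ℂ) (φ : ZMod d₂ → ℂ)
    (hψ : ∑ k, ‖ψ k‖ ^ 2 = 1) (hφ : ∑ k, ‖φ k‖ ^ 2 = 1) :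
    (1 / (1 - α)) * Real.log
        (∑ a : (ZMod d₁ × ZMod d₁) × (ZMod d₂ × ZMod d₂),
          ((1 / (d₁ * d₂) : ℝ) *
            ‖(((Disp d₁ ((a.1.1.val : ℤ), (a.1.2.val : ℤ)) ⊗ₖ
                  Disp d₂ ((a.2.1.val : ℤ), (a.2.2.val : ℤ))) *
                (proj ψ ⊗ₖ proj φ)).trace)‖ ^ 2) ^ α)
      - Real.log ((d₁ : ℝ) * d₂)
    = stabEntropy d₁ α (proj ψ) + stabEntropy d₂ α (proj φ) := by
  have hψ_pos := sum_charDistr_proj_rpow_pos d₁ α hψ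
  have hφ_pos := sum_charDistr_proj_rpow_pos d₂ α hφ
  rw [sum_rpow_charDistr_kronecker, Real.log_mul hψ_pos.ne' hφ_pos.ne',
    Real.log_mul (by simp [NeZero.ne d₁]) (by simp [NeZero.ne d₂]),
    stabEntropy_eq_log_sum_charDistr, stabEntropy_eq_log_sum_charDistr]
  ring

/-- Additivity of the stabilizer entropy under tensor products:
`M_α(ψ ⊗ φ) = M_α(ψ) + M_α(φ)`, where on the composite space the Weyl–Heisenberg
displacement operators are the `D_a ⊗ D_b`. -/
theorem stabEntropy_additive (d₁ d₂ : ℕ) [NeZero d₁] [NeZero d₂] (α : ℝ) (hα : 2 ≤ α)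
    (ψ : ZMod d₁ → ℂ) (φ : ZMod d₂ → ℂ)
    (hψ : ∑ k, ‖ψ k‖ ^ 2 = 1) (hφ : ∑ k, ‖φ k‖ ^ 2 = 1) :
    (1 / (1 - α)) * Real.log
        (∑ a : (ZMod d₁ × ZMod d₁) × (ZMod d₂ × ZMod d₂),
          ((1 / (d₁ * d₂) : ℝ) *
            ‖(((Disp d₁ ((a.1.1.val : ℤ), (a.1.2.val : ℤ)) ⊗ₖ
                  Disp d₂ ((a.2.1.val : ℤ), (a.2.2.val : ℤ))) *
                (proj ψ ⊗ₖ proj φ)).trace)‖ ^ 2) ^ α)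
      - Real.log ((d₁ : ℝ) * d₂)
    = stabEntropy d₁ α (proj ψ) + stabEntropy d₂ α (proj φ) :=
  stabEntropy_additive_general d₁ d₂ α ψ φ hψ hφ
end
end

section
/- If {φ_i}_{i=1}^{d²} are rank-1 projectors on ℂ^d with tr(φ_i φ_j) = 1/(d+1) for all i ≠ j, then ∑_i φ_i = d·I. -/
/-! For `S = ∑ᵢ φᵢ`, the normalisation gives `tr S = d²` and the overlaps give
`tr S² = d² + d²(d² - 1)/(d + 1) = d³`. Hence `tr (S - d I)² = d³ - 2d · d² + d² · d = 0`,
and a Hermitian matrix with `tr A² = tr AᴴA = 0` vanishes. -/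

open scoped BigOperators Kronecker
open Matrix

noncomputable section

section Projector

variable {n : Type*} [Fintype n]

open scoped ComplexOrder in
theorem proj_isHermitian (v : n → ℂ) : (proj v).IsHermitian :=
  (posSemidef_vecMulVec_self_star v).isHermitian

theorem trace_proj_s11 (v : n → ℂ) : (proj v).trace = star v ⬝ᵥ v := by
  rw [proj, trace_vecMulVec, dotProduct_comm]

theorem trace_proj_mul_proj (v w : n → ℂ) :
    (proj v * proj w).trace = (star v ⬝ᵥ w) * (star w ⬝ᵥ v) := by
  rw [proj, proj, vecMulVec_mul_vecMulVec, trace_vecMulVec, dotProduct_smul, smul_eq_mul,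
    dotProduct_comm v]

theorem star_dotProduct_self_eq_sum_norm_sq (v : n → ℂ) :
    star v ⬝ᵥ v = ((∑ k, ‖v k‖ ^ 2 : ℝ) : ℂ) := by
  push_cast
  simp [dotProduct, Complex.conj_mul']

end Projector

theorem Matrix.trace_sum_mul_sum_of_pairwise {R ι n : Type*} [CommRing R] [Fintype ι] [Fintype n]
    (P : ι → Matrix n n R) (t : R) (hdiag : ∀ i, (P i * P i).trace = 1)
    (hoff : Pairwise fun i j => (P i * P j).trace = t) :
    ((∑ i, P i) * ∑ i, P i).trace = Fintype.card ι * (1 - t) + Fintype.card ι ^ 2 * t := by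
  classical
  have hentry : ∀ i j, (P i * P j).trace = t + if i = j then 1 - t else 0 := by
    intro i j
    split_ifs with hij
    · rw [hij, hdiag]; ring
    · rw [hoff hij, add_zero]
  simp only [Finset.sum_mul_sum, trace_sum, hentry, Finset.sum_add_distrib, Finset.sum_const,
    Finset.sum_ite_eq, Finset.mem_univ, if_true, Finset.card_univ, nsmul_eq_mul]
  ring

open scoped ComplexOrder in
theorem Matrix.IsHermitian.eq_smul_one_of_trace_of_trace_mul_self {𝕜 n : Type*} [RCLike 𝕜]
    [Fintype n] [DecidableEq n] {S : Matrix n n 𝕜} (hS : S.IsHermitian) (c : ℝ)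
    (h₁ : S.trace = c * Fintype.card n) (h₂ : (S * S).trace = c ^ 2 * Fintype.card n) :
    S = (c : 𝕜) • 1 := by
  have hA : (S - (c : 𝕜) • 1)ᴴ = S - (c : 𝕜) • 1 := by
    rw [conjTranspose_sub, conjTranspose_smul, conjTranspose_one, hS.eq, RCLike.star_def,
      RCLike.conj_ofReal]
  rw [← sub_eq_zero, ← trace_conjTranspose_mul_self_eq_zero_iff, hA]
  simp only [sub_mul, mul_sub, smul_mul, Matrix.mul_smul, one_mul, mul_one, trace_sub, trace_smul,
    trace_one, h₁, h₂, smul_eq_mul]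
  ring

theorem sic_sum_eq_general (d : ℕ) (v : Fin (d ^ 2) → Fin d → ℂ)
    (hv : ∀ i, ∑ k, ‖v i k‖ ^ 2 = 1)
    (hsic : ∀ i j, i ≠ j → (proj (v i) * proj (v j)).trace = 1 / ((d : ℂ) + 1)) :
    ∑ i, proj (v i) = (d : ℂ) • (1 : Matrix (Fin d) (Fin d) ℂ) := by
  have hnorm : ∀ i, star (v i) ⬝ᵥ v i = 1 := fun i => by
    rw [star_dotProduct_self_eq_sum_norm_sq, hv i, Complex.ofReal_one]
  have hd_succ : (d : ℂ) + 1 ≠ 0 := by exact_mod_cast d.succ_ne_zero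
  have hS : (∑ i, proj (v i)).IsHermitian :=
    isSelfAdjoint_sum _ fun i _ => proj_isHermitian (v i)
  have hsq := trace_sum_mul_sum_of_pairwise (fun i => proj (v i)) _
    (fun i => by rw [trace_proj_mul_proj, hnorm, one_mul]) hsic
  rw [← Complex.ofReal_natCast]
  exact hS.eq_smul_one_of_trace_of_trace_mul_self d
    (by simp [trace_sum, trace_proj_s11, hnorm]; ring)
    (by rw [hsq]; field_simp; simp; ring)

/-- If `d²` rank-one projectors on `ℂ^d` satisfy `tr(φᵢ φⱼ) = 1/(d+1)` for all `i ≠ j`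
(a SIC), then they sum to `d · I`. -/
theorem sic_sum_eq (d : ℕ) (hd : 0 < d) (v : Fin (d ^ 2) → Fin d → ℂ)
    (hv : ∀ i, ∑ k, ‖v i k‖ ^ 2 = 1)
    (hsic : ∀ i j, i ≠ j → (proj (v i) * proj (v j)).trace = 1 / ((d : ℂ) + 1)) :
    ∑ i, proj (v i) = (d : ℂ) • (1 : Matrix (Fin d) (Fin d) ℂ) :=
  sic_sum_eq_general d v hv hsic
end
end

section
/- For any unit vector |ψ⟩ ∈ ℂ^d and any real α ≥ 2, the stabilizer entropy satisfies M_α(ψ) ≤ (1/(1−α)) log[(1 + (d−1)(d+1)^{1−α})/d]. -/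
open scoped BigOperators Kronecker
open Matrix

noncomputable section

/-!
Write `p_a = |⟨ψ|D_a|ψ⟩|² / d`. Since `⟨ψ|D_a|ψ⟩` is, up to a phase, the discrete Fourier
transform in `a₂` of `k ↦ ψ_k conj ψ_{k+a₁}`, Parseval gives `∑_a |⟨ψ|D_a|ψ⟩|² = d ‖ψ‖⁴`, so `p`
is a probability distribution on `ℤ_d × ℤ_d` with `p_0 = 1/d`. For `α ≥ 1` the power mean
inequality on the remaining `d² - 1` entries gives
`∑_a p_a^α ≥ d^{-α} + (1 - 1/d)^α / (d² - 1)^{α-1} = (1 + (d-1)(d+1)^{1-α}) / d^α`,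
and the prefactor `1/(1-α) < 0` turns this lower bound into the upper bound on `M_α`.
-/

namespace AddChar

variable {R : Type*} [CommRing R] [Fintype R]

theorem sum_norm_sq_sum_mulShift {ψ : AddChar R ℂ} (hψ : ψ.IsPrimitive) (c : R → ℂ) :
    ∑ m, ‖∑ k, ψ (m * k) * c k‖ ^ 2 = Fintype.card R * ∑ k, ‖c k‖ ^ 2 := by
  classical
  have hconj (m l : R) : starRingEnd ℂ (ψ (m * l) * c l) = ψ (m * -l) * starRingEnd ℂ (c l) := by
    rw [map_mul, mul_neg, map_neg_eq_conj]
  suffices h : ∑ m, (‖∑ k, ψ (m * k) * c k‖ ^ 2 : ℂ) = Fintype.card R * ∑ k, (‖c k‖ ^ 2 : ℂ) by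
    exact_mod_cast h
  calc ∑ m, (‖∑ k, ψ (m * k) * c k‖ ^ 2 : ℂ)
      = ∑ k, ∑ l, (∑ m, ψ (m * (k - l))) * (c k * starRingEnd ℂ (c l)) := by
        simp_rw [← Complex.mul_conj', map_sum, hconj, Finset.sum_mul_sum, Finset.sum_mul]
        rw [Finset.sum_comm]
        refine Finset.sum_congr rfl fun k _ => ?_
        rw [Finset.sum_comm]
        refine Finset.sum_congr rfl fun l _ => Finset.sum_congr rfl fun m _ => ?_
        rw [mul_sub, sub_eq_add_neg, ← mul_neg, map_add_eq_mul]
        ring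
    _ = Fintype.card R * ∑ k, (‖c k‖ ^ 2 : ℂ) := by
        simp_rw [sum_mulShift _ hψ, sub_eq_zero, Nat.cast_ite, Nat.cast_zero, ite_mul, zero_mul,
          Finset.sum_ite_eq, Finset.mem_univ, if_true, Complex.mul_conj', Finset.mul_sum]

end AddChar

theorem norm_tau_zpow (d : ℕ) (n : ℤ) : ‖tau d ^ n‖ = 1 := by
  rw [tau, ← Complex.exp_int_mul, Complex.norm_exp]
  simp [Complex.mul_re, Complex.div_re]

section Displacement

variable {d : ℕ} [NeZero d]

theorem omega_zpow_eq_stdAddChar (n : ℤ) : omega d ^ n = ZMod.stdAddChar (n : ZMod d) := by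
  rw [ZMod.stdAddChar_coe, omega, ← Complex.exp_int_mul]
  ring_nf

theorem trace_disp_mul_proj (ψ : ZMod d → ℂ) (a₁ a₂ : ZMod d) :
    (Disp d (a₁.val, a₂.val) * proj ψ).trace =
      tau d ^ ((a₁.val : ℤ) * a₂.val) *
        ∑ k, ZMod.stdAddChar (a₂ * k) * (ψ k * starRingEnd ℂ (ψ (k + a₁))) := by
  simp only [Matrix.trace, Matrix.diag, Matrix.mul_apply, Disp, proj, Matrix.vecMulVec_apply,
    Pi.star_apply, RCLike.star_def, omega_zpow_eq_stdAddChar]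
  rw [Finset.sum_comm, Finset.mul_sum]
  refine Finset.sum_congr rfl fun k _ => ?_
  rw [Finset.sum_eq_single (k + a₁)]
  · push_cast
    simp [mul_assoc, mul_comm, mul_left_comm]
  · intro j _ hj; simp [hj]
  · simp

theorem sum_norm_trace_disp_mul_proj_sq (ψ : ZMod d → ℂ) :
    ∑ a : ZMod d × ZMod d, ‖(Disp d (a.1.val, a.2.val) * proj ψ).trace‖ ^ 2 =
      d * (∑ k, ‖ψ k‖ ^ 2) ^ 2 := by
  simp_rw [Fintype.sum_prod_type, trace_disp_mul_proj, norm_mul, norm_tau_zpow, one_mul,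
    AddChar.sum_norm_sq_sum_mulShift (ZMod.isPrimitive_stdAddChar d)]
  have hshift (k : ZMod d) : ∑ x, ‖ψ (k + x)‖ ^ 2 = ∑ x, ‖ψ x‖ ^ 2 :=
    Equiv.sum_comp (Equiv.addLeft k) fun x => ‖ψ x‖ ^ 2
  rw [ZMod.card, ← Finset.mul_sum, Finset.sum_comm]
  simp_rw [norm_mul, Complex.norm_conj, mul_pow, ← Finset.mul_sum, hshift, ← Finset.sum_mul, sq]

theorem trace_disp_zero_mul_proj (ψ : ZMod d → ℂ) :
    (Disp d (0, 0) * proj ψ).trace = ((∑ k, ‖ψ k‖ ^ 2 : ℝ) : ℂ) := by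
  simpa [Complex.mul_conj'] using trace_disp_mul_proj ψ 0 0

end Displacement

open Finset in
theorem Real.rpow_add_rpow_div_le_sum_rpow {ι : Type*} [Fintype ι] [DecidableEq ι] {p : ι → ℝ}
    (hp : ∀ i, 0 ≤ p i) (hsum : ∑ i, p i = 1) (i₀ : ι) {α : ℝ} (hα : 1 ≤ α) :
    p i₀ ^ α + (1 - p i₀) ^ α / ((Fintype.card ι : ℝ) - 1) ^ (α - 1) ≤ ∑ i, p i ^ α := by
  have hcard : (#(univ.erase i₀) : ℝ) = Fintype.card ι - 1 := by
    rw [card_erase_of_mem (mem_univ _), card_univ, Nat.cast_pred (Fintype.card_pos_iff.2 ⟨i₀⟩)]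
  have hrest : ∑ i ∈ univ.erase i₀, p i = 1 - p i₀ := by
    rw [← hsum, ← add_sum_erase _ _ (mem_univ i₀), add_sub_cancel_left]
  have hmean := Real.rpow_sum_le_const_mul_sum_rpow_of_nonneg (univ.erase i₀) hα
    fun i _ => hp i
  rw [hrest, hcard] at hmean
  rw [← add_sum_erase _ _ (mem_univ i₀)]
  gcongr
  exact div_le_of_le_mul₀ (hcard ▸ by positivity) (sum_nonneg fun i _ => Real.rpow_nonneg (hp i) α)
    (by rwa [mul_comm])

theorem Real.inv_rpow_add_rpow_div_eq {d α : ℝ} (hd : 1 ≤ d) (hα : α ≠ 0) :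
    (1 / d) ^ α + (1 - 1 / d) ^ α / (d * d - 1) ^ (α - 1) =
      (1 + (d - 1) * (d + 1) ^ (1 - α)) / d ^ α := by
  obtain rfl | hd := hd.eq_or_lt
  · simp [Real.zero_rpow hα]
  have hd0 : 0 < d := by linarith
  have hd1 : 0 < d - 1 := by linarith
  have hsplit : (d - 1) ^ α = (d - 1) * (d - 1) ^ (α - 1) := by
    rw [← Real.rpow_one_add' hd1.le (by simpa using hα), add_sub_cancel]
  rw [show 1 - 1 / d = (d - 1) / d by field_simp, show d * d - 1 = (d - 1) * (d + 1) by ring,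
    Real.div_rpow hd1.le hd0.le, Real.div_rpow zero_le_one hd0.le, Real.one_rpow,
    Real.mul_rpow hd1.le (by linarith), hsplit, show 1 - α = -(α - 1) by ring,
    Real.rpow_neg (by linarith)]
  have : 0 < (d - 1) ^ (α - 1) := by positivity
  have : 0 < (d + 1) ^ (α - 1) := by positivity
  have : 0 < d ^ α := by positivity
  field_simp

theorem stabEntropy_le_of_div_rpow_le {d : ℕ} [NeZero d] {α B : ℝ} (ρ : Matrix (ZMod d) (ZMod d) ℂ)
    (hα : 1 < α) (hB : 0 < B)
    (h : B / (d : ℝ) ^ α ≤ ∑ a : ZMod d × ZMod d,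
      ((1 / d) * ‖(Disp d ((a.1.val : ℤ), (a.2.val : ℤ)) * ρ).trace‖ ^ 2) ^ α) :
    stabEntropy d α ρ ≤ (1 / (1 - α)) * Real.log (B / d) := by
  have hd : (0 : ℝ) < d := by simp [Nat.pos_of_neZero]
  have hlog := Real.log_le_log (by positivity) h
  have hcoef : 1 / (1 - α) ≤ 0 := by
    rw [one_div_nonpos]; linarith
  have hrewrite : 1 / (1 - α) * Real.log (B / (d : ℝ) ^ α) - Real.log d =
      1 / (1 - α) * Real.log (B / d) := by
    rw [Real.log_div hB.ne' (by positivity), Real.log_rpow hd, Real.log_div hB.ne' hd.ne']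
    field_simp [show 1 - α ≠ 0 by linarith]
    ring
  rw [stabEntropy, ← hrewrite]
  gcongr ?_ - _
  exact mul_le_mul_of_nonpos_left hlog hcoef

/-- Upper bound on the stabilizer entropy: for any unit vector `ψ ∈ ℂ^d` and real `α ≥ 2`,
`M_α(ψ) ≤ (1/(1-α)) log[(1 + (d-1)(d+1)^{1-α})/d]`. -/
theorem stabEntropy_le (d : ℕ) [NeZero d] (α : ℝ) (hα : 2 ≤ α)
    (ψ : ZMod d → ℂ) (hψ : ∑ k, ‖ψ k‖ ^ 2 = 1) :
    stabEntropy d α (proj ψ) ≤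
      (1 / (1 - α)) *
        Real.log ((1 + ((d : ℝ) - 1) * ((d : ℝ) + 1) ^ (1 - α)) / d) := by
  have hd : (1 : ℝ) ≤ d := Nat.one_le_cast.2 NeZero.one_le
  set p : ZMod d × ZMod d → ℝ := fun a => 1 / d * ‖(Disp d (a.1.val, a.2.val) * proj ψ).trace‖ ^ 2
  have hp_zero : p (0, 0) = 1 / d := by
    simp [p, trace_disp_zero_mul_proj, hψ]
  have hp_sum : ∑ a, p a = 1 := by
    rw [← Finset.mul_sum, sum_norm_trace_disp_mul_proj_sq, hψ]
    field_simp
  have hbound := Real.rpow_add_rpow_div_le_sum_rpow (fun a => by positivity) hp_sum (0, 0)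
    (by linarith : 1 ≤ α)
  rw [hp_zero, Fintype.card_prod, ZMod.card, Nat.cast_mul,
    Real.inv_rpow_add_rpow_div_eq hd (by linarith)] at hbound
  have hB : 0 < 1 + ((d : ℝ) - 1) * ((d : ℝ) + 1) ^ (1 - α) := by
    have : 0 ≤ ((d : ℝ) - 1) := by linarith
    positivity
  exact stabEntropy_le_of_div_rpow_le _ (by linarith) hB hbound
end
end
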